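/- Let B be diagonal with entries B₁₁, …, Bₙₙ, fix i ∈ {1,…,n}, and let a, b : ℝ → ℝ be smooth. Then the vector field X = a(x⁻)∂_i + b(x⁻) x^i ∂₊ on ℝ^{n+2} is Killing for g_B if and only if a′ = −b and b′ = B_{ii} a. -/

import Mathlib

open Matrix

/-- Index type for the coordinates `(x⁺, x⁻, x¹, …, xⁿ)` on `ℝ^{n+2}`:
`Sum.inl 0` is the index `+`, `Sum.inl 1` is the index `−`, and `Sum.inr i` is `i`. -/
abbrev CWIdx (n : ℕ) : Type := Fin 2 ⊕ Fin n

/-- Points of `ℝ^{n+2}`. -/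
abbrev CWPt (n : ℕ) : Type := CWIdx n → ℝ

/-- The coefficients of the Cahen–Wallach metric `g_B`. -/
noncomputable def gB {n : ℕ} (B : Matrix (Fin n) (Fin n) ℝ) (x : CWPt n) :
    CWIdx n → CWIdx n → ℝ :=
  fun μ ν => match μ, ν with
  | .inl a, .inl b =>
      if a = 0 ∧ b = 1 then 1
      else if a = 1 ∧ b = 0 then 1
      else if a = 1 ∧ b = 1 then -(∑ i, ∑ j, B i j * x (.inr i) * x (.inr j))
      else 0
  | .inr i, .inr j => if i = j then 1 else 0
  | _, _ => 0

/-- Partial derivative `∂_μ f` of a scalar function on `ℝ^{n+2}`. -/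
noncomputable def pd {n : ℕ} (μ : CWIdx n) (f : CWPt n → ℝ) (x : CWPt n) : ℝ :=
  fderiv ℝ f x (Pi.single μ 1)

/-- A vector field `X` on `ℝ^{n+2}` is Killing for `g_B`. -/
def IsKilling {n : ℕ} (B : Matrix (Fin n) (Fin n) ℝ) (X : CWPt n → CWPt n) : Prop :=
  ∀ (x : CWPt n) (μ ν : CWIdx n),
    (∑ κ, X x κ * pd κ (fun y => gB B y μ ν) x)
      + (∑ κ, pd μ (fun y => X y κ) x * gB B x κ ν)
      + (∑ κ, pd ν (fun y => X y κ) x * gB B x μ κ) = 0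

set_option linter.unnecessarySeqFocus false
set_option linter.unreachableTactic false
set_option linter.unusedTactic false

variable {n : ℕ}

/-! ### basic pd lemmas -/

lemma diff_eval (ν : CWIdx n) : Differentiable ℝ (fun y : CWPt n => y ν) :=
  (ContinuousLinearMap.proj (R := ℝ) (φ := fun _ : CWIdx n => ℝ) ν).differentiable

lemma pd_const (μ : CWIdx n) (c : ℝ) (x : CWPt n) : pd μ (fun _ => c) x = 0 := by
  simp [pd]

lemma pd_comp (μ ν : CWIdx n) (f : ℝ → ℝ) (hf : Differentiable ℝ f) (x : CWPt n) :
    pd μ (fun y => f (y ν)) x = if μ = ν then deriv f (x ν) else 0 := by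
  have h1 : HasFDerivAt (fun y : CWPt n => y ν)
      (ContinuousLinearMap.proj (R := ℝ) (φ := fun _ : CWIdx n => ℝ) ν) x :=
    (ContinuousLinearMap.proj (R := ℝ) (φ := fun _ : CWIdx n => ℝ) ν).hasFDerivAt
  have h2 : HasDerivAt f (deriv f (x ν)) (x ν) := (hf (x ν)).hasDerivAt
  have h3 : HasFDerivAt (fun y : CWPt n => f (y ν))
      (deriv f (x ν) • ContinuousLinearMap.proj (R := ℝ) (φ := fun _ : CWIdx n => ℝ) ν) x :=
    h2.comp_hasFDerivAt x h1
  rw [pd, h3.fderiv]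
  simp only [ContinuousLinearMap.smul_apply, ContinuousLinearMap.proj_apply, smul_eq_mul,
    Pi.single_apply]
  by_cases h : μ = ν
  · subst h; simp
  · simp [h, Ne.symm h]

lemma pd_eval (μ ν : CWIdx n) (x : CWPt n) :
    pd μ (fun y => y ν) x = if μ = ν then 1 else 0 := by
  have := pd_comp μ ν id differentiable_id x
  simpa using this

lemma pd_mul (μ : CWIdx n) (f g : CWPt n → ℝ) (x : CWPt n)
    (hf : DifferentiableAt ℝ f x) (hg : DifferentiableAt ℝ g x) :
    pd μ (fun y => f y * g y) x = pd μ f x * g x + f x * pd μ g x := by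
  rw [pd, fderiv_fun_mul hf hg]
  simp [pd]
  ring

lemma pd_const_mul (μ : CWIdx n) (c : ℝ) (f : CWPt n → ℝ) (x : CWPt n)
    (hf : DifferentiableAt ℝ f x) :
    pd μ (fun y => c * f y) x = c * pd μ f x := by
  rw [pd, fderiv_const_mul hf]
  simp [pd]

lemma pd_neg (μ : CWIdx n) (f : CWPt n → ℝ) (x : CWPt n) :
    pd μ (fun y => -f y) x = -pd μ f x := by
  rw [pd, fderiv_fun_neg]
  simp [pd]

lemma pd_sum {ι : Type*} (s : Finset ι) (μ : CWIdx n) (f : ι → CWPt n → ℝ) (x : CWPt n)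
    (hf : ∀ p ∈ s, DifferentiableAt ℝ (f p) x) :
    pd μ (fun y => ∑ p ∈ s, f p y) x = ∑ p ∈ s, pd μ (f p) x := by
  rw [pd, fderiv_fun_sum hf]
  simp [pd]

/-! ### gB entries -/

lemma g00 (B : Matrix (Fin n) (Fin n) ℝ) (x : CWPt n) : gB B x (.inl 0) (.inl 0) = 0 := by
  simp [gB]

lemma g01 (B : Matrix (Fin n) (Fin n) ℝ) (x : CWPt n) : gB B x (.inl 0) (.inl 1) = 1 := by
  simp [gB]

lemma g10 (B : Matrix (Fin n) (Fin n) ℝ) (x : CWPt n) : gB B x (.inl 1) (.inl 0) = 1 := by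
  simp [gB]

lemma g0r (B : Matrix (Fin n) (Fin n) ℝ) (x : CWPt n) (c : Fin 2) (j : Fin n) :
    gB B x (.inl c) (.inr j) = 0 := by
  simp [gB]

lemma gr0 (B : Matrix (Fin n) (Fin n) ℝ) (x : CWPt n) (c : Fin 2) (j : Fin n) :
    gB B x (.inr j) (.inl c) = 0 := by
  simp [gB]

lemma grr (B : Matrix (Fin n) (Fin n) ℝ) (x : CWPt n) (p q : Fin n) :
    gB B x (.inr p) (.inr q) = if p = q then 1 else 0 := rfl

lemma gmm_eq (Bd : Fin n → ℝ) (y : CWPt n) :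
    gB (Matrix.diagonal Bd) y (.inl 1) (.inl 1)
      = -∑ p, Bd p * (y (.inr p) * y (.inr p)) := by
  have h : ∀ p, ∑ q, Matrix.diagonal Bd p q * y (.inr p) * y (.inr q)
      = Bd p * (y (.inr p) * y (.inr p)) := by
    intro p
    rw [Finset.sum_eq_single p]
    · simp [Matrix.diagonal_apply]; ring
    · intro q _ hq; simp [Matrix.diagonal_apply, Ne.symm hq]
    · simp
  simp only [gB]
  norm_num
  exact Finset.sum_congr rfl fun p _ => h p

/-- the constant entries of g have zero derivative -/
lemma pd_g_const (B : Matrix (Fin n) (Fin n) ℝ) (κ : CWIdx n) (x : CWPt n)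
    (μ ν : CWIdx n) (h : ¬(μ = Sum.inl 1 ∧ ν = Sum.inl 1)) :
    pd κ (fun y => gB B y μ ν) x = 0 := by
  have hfun : (fun y : CWPt n => gB B y μ ν) = fun _ => gB B x μ ν := by
    funext y
    rcases μ with c | p <;> rcases ν with d | q
    · fin_cases c <;> fin_cases d <;> simp_all [gB]
    · rfl
    · rfl
    · rfl
  rw [hfun, pd_const]

lemma pd_gmm (Bd : Fin n → ℝ) (κ : CWIdx n) (x : CWPt n) :
    pd κ (fun y => gB (Matrix.diagonal Bd) y (.inl 1) (.inl 1)) x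
      = -(2 * (Sum.elim (fun _ => (0:ℝ)) (fun j => Bd j * x (.inr j)) κ)) := by
  have hfun : (fun y : CWPt n => gB (Matrix.diagonal Bd) y (.inl 1) (.inl 1))
      = fun y => -∑ p, Bd p * (y (.inr p) * y (.inr p)) := by
    funext y; exact gmm_eq Bd y
  rw [hfun, pd_neg, pd_sum]
  · have hterm : ∀ p, pd κ (fun y : CWPt n => Bd p * (y (.inr p) * y (.inr p))) x
        = Bd p * ((if κ = .inr p then 1 else 0) * x (.inr p)
            + x (.inr p) * (if κ = .inr p then 1 else 0)) := by
      intro p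
      rw [pd_const_mul κ (Bd p) (fun y => y (.inr p) * y (.inr p)) x
          (((diff_eval (.inr p)).mul (diff_eval (.inr p))) x),
        pd_mul κ _ _ x ((diff_eval (.inr p)) x) ((diff_eval (.inr p)) x), pd_eval]
    rw [Finset.sum_congr rfl fun p _ => hterm p]
    rcases κ with c | j
    · simp
    · rw [Finset.sum_eq_single j]
      · simp; ring
      · intro q _ hq
        simp [Ne.symm hq, fun h : q = j => hq h]
      · simp
  · intro p _
    exact ((differentiableAt_const _).mul (((diff_eval (.inr p)).mul (diff_eval (.inr p))) x))

/-! ### the vector field -/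

def XF {n : ℕ} (i : Fin n) (a b : ℝ → ℝ) : CWPt n → CWPt n := fun x =>
  Pi.single (Sum.inr i) (a (x (Sum.inl 1)))
    + Pi.single (Sum.inl 0) (b (x (Sum.inl 1)) * x (Sum.inr i))

lemma XF_inl0 (i : Fin n) (a b : ℝ → ℝ) (y : CWPt n) :
    XF i a b y (Sum.inl 0) = b (y (Sum.inl 1)) * y (Sum.inr i) := by
  simp [XF, Pi.single_apply]

lemma XF_inl1 (i : Fin n) (a b : ℝ → ℝ) (y : CWPt n) :
    XF i a b y (Sum.inl 1) = 0 := by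
  simp [XF, Pi.single_apply]

lemma XF_inr (i : Fin n) (a b : ℝ → ℝ) (y : CWPt n) (j : Fin n) :
    XF i a b y (Sum.inr j) = if j = i then a (y (Sum.inl 1)) else 0 := by
  simp [XF, Pi.single_apply]

lemma pdXF_inl0 (i : Fin n) (a b : ℝ → ℝ) (hb : Differentiable ℝ b)
    (μ : CWIdx n) (x : CWPt n) :
    pd μ (fun y => XF i a b y (Sum.inl 0)) x
      = (if μ = Sum.inl 1 then deriv b (x (Sum.inl 1)) else 0) * x (Sum.inr i)
        + b (x (Sum.inl 1)) * (if μ = Sum.inr i then 1 else 0) := by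
  have hfun : (fun y : CWPt n => XF i a b y (Sum.inl 0))
      = fun y => b (y (Sum.inl 1)) * y (Sum.inr i) := by
    funext y; exact XF_inl0 i a b y
  rw [hfun, pd_mul μ (fun y => b (y (Sum.inl 1))) (fun y => y (Sum.inr i)) x
    (by exact (hb.comp (diff_eval (Sum.inl 1))) x) ((diff_eval (Sum.inr i)) x),
    pd_comp μ _ b hb, pd_eval]

lemma pdXF_inl1 (i : Fin n) (a b : ℝ → ℝ) (μ : CWIdx n) (x : CWPt n) :
    pd μ (fun y => XF i a b y (Sum.inl 1)) x = 0 := by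
  have hfun : (fun y : CWPt n => XF i a b y (Sum.inl 1)) = fun _ => (0:ℝ) := by
    funext y; exact XF_inl1 i a b y
  rw [hfun, pd_const]

lemma pdXF_inr (i : Fin n) (a b : ℝ → ℝ) (ha : Differentiable ℝ a)
    (μ : CWIdx n) (x : CWPt n) (j : Fin n) :
    pd μ (fun y => XF i a b y (Sum.inr j)) x
      = if j = i then (if μ = Sum.inl 1 then deriv a (x (Sum.inl 1)) else 0) else 0 := by
  by_cases h : j = i
  · have hfun : (fun y : CWPt n => XF i a b y (Sum.inr j))
        = fun y => a (y (Sum.inl 1)) := by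
      funext y; simp [XF_inr, h]
    rw [hfun, pd_comp μ _ a ha]
    simp [h]
  · have hfun : (fun y : CWPt n => XF i a b y (Sum.inr j)) = fun _ => (0:ℝ) := by
      funext y; simp [XF_inr, h]
    rw [hfun, pd_const]
    simp [h]

lemma pd_g (Bd : Fin n → ℝ) (κ : CWIdx n) (x : CWPt n) (μ ν : CWIdx n) :
    pd κ (fun y => gB (Matrix.diagonal Bd) y μ ν) x
      = if μ = Sum.inl 1 ∧ ν = Sum.inl 1 then
          -(2 * Sum.elim (fun _ => (0:ℝ)) (fun j => Bd j * x (.inr j)) κ) else 0 := by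
  by_cases h : μ = Sum.inl 1 ∧ ν = Sum.inl 1
  · obtain ⟨h1, h2⟩ := h; subst h1; subst h2; simp [pd_gmm]
  · simp [h, pd_g_const _ _ _ _ _ h]

lemma killing_lhs (Bd : Fin n → ℝ) (i : Fin n) (a b : ℝ → ℝ)
    (ha : Differentiable ℝ a) (hb : Differentiable ℝ b) (x : CWPt n) (μ ν : CWIdx n) :
    (∑ κ, XF i a b x κ * pd κ (fun y => gB (Matrix.diagonal Bd) y μ ν) x)
      + (∑ κ, pd μ (fun y => XF i a b y κ) x * gB (Matrix.diagonal Bd) x κ ν)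
      + (∑ κ, pd ν (fun y => XF i a b y κ) x * gB (Matrix.diagonal Bd) x μ κ)
    = (if μ = Sum.inl 1 ∧ ν = Sum.inl 1 then
         2 * x (Sum.inr i) * (deriv b (x (Sum.inl 1)) - Bd i * a (x (Sum.inl 1))) else 0)
      + (if μ = Sum.inl 1 ∧ ν = Sum.inr i then
         deriv a (x (Sum.inl 1)) + b (x (Sum.inl 1)) else 0)
      + (if μ = Sum.inr i ∧ ν = Sum.inl 1 then
         deriv a (x (Sum.inl 1)) + b (x (Sum.inl 1)) else 0) := by
  rcases μ with c | p <;> rcases ν with d | q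
  · fin_cases c <;> fin_cases d
    · -- (+,+)
      simp only [Fintype.sum_sum_type, Fin.sum_univ_two, pdXF_inl0 i a b hb,
        pdXF_inl1, pdXF_inr i a b ha, pd_g]
      simp [pd_const, XF_inl0, XF_inl1, XF_inr, g00, g01, g10, g0r, gr0, grr]
    · -- (+,−)
      simp only [Fintype.sum_sum_type, Fin.sum_univ_two, pdXF_inl0 i a b hb,
        pdXF_inl1, pdXF_inr i a b ha, pd_g]
      simp [pd_const, XF_inl0, XF_inl1, XF_inr, g00, g01, g10, g0r, gr0, grr]
    · -- (−,+)
      simp only [Fintype.sum_sum_type, Fin.sum_univ_two, pdXF_inl0 i a b hb,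
        pdXF_inl1, pdXF_inr i a b ha, pd_g]
      simp [pd_const, XF_inl0, XF_inl1, XF_inr, g00, g01, g10, g0r, gr0, grr]
    · -- (−,−)
      simp only [Fintype.sum_sum_type, Fin.sum_univ_two, pdXF_inl0 i a b hb,
        pdXF_inl1, pdXF_inr i a b ha, pd_g]
      simp [pd_const, XF_inl0, XF_inl1, XF_inr, g00, g01, g10, g0r, gr0, grr,
        Finset.sum_ite_eq', ite_mul, mul_ite]
      ring
  · -- (inl c, inr q)
    fin_cases c
    · simp only [Fintype.sum_sum_type, Fin.sum_univ_two, pdXF_inl0 i a b hb,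
        pdXF_inl1, pdXF_inr i a b ha, pd_g]
      simp [pd_const, XF_inl0, XF_inl1, XF_inr, g00, g01, g10, g0r, gr0, grr]
    · simp only [Fintype.sum_sum_type, Fin.sum_univ_two, pdXF_inl0 i a b hb,
        pdXF_inl1, pdXF_inr i a b ha, pd_g]
      by_cases hq : q = i <;>
        simp [hq, pd_const, XF_inl0, XF_inl1, XF_inr, g00, g01, g10, g0r, gr0, grr,
          Finset.sum_ite_eq', ite_mul, mul_ite]
  · -- (inr p, inl d)
    fin_cases d
    · simp only [Fintype.sum_sum_type, Fin.sum_univ_two, pdXF_inl0 i a b hb,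
        pdXF_inl1, pdXF_inr i a b ha, pd_g]
      simp [pd_const, XF_inl0, XF_inl1, XF_inr, g00, g01, g10, g0r, gr0, grr]
    · simp only [Fintype.sum_sum_type, Fin.sum_univ_two, pdXF_inl0 i a b hb,
        pdXF_inl1, pdXF_inr i a b ha, pd_g]
      by_cases hp : p = i <;>
        simp [hp, pd_const, XF_inl0, XF_inl1, XF_inr, g00, g01, g10, g0r, gr0, grr,
          Finset.sum_ite_eq', ite_mul, mul_ite] <;> ring
  · -- (inr p, inr q)
    simp only [Fintype.sum_sum_type, Fin.sum_univ_two, pdXF_inl0 i a b hb,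
      pdXF_inl1, pdXF_inr i a b ha, pd_g]
    simp [pd_const, XF_inl0, XF_inl1, XF_inr, g00, g01, g10, g0r, gr0, grr]

/-- For diagonal `B` and smooth `a, b : ℝ → ℝ`, the vector field
`X = a(x⁻)∂_i + b(x⁻) x^i ∂₊` is Killing for `g_B` if and only if
`a′ = −b` and `b′ = B_{ii} a`. -/
theorem killing_ansatz_iff {n : ℕ} (Bd : Fin n → ℝ) (i : Fin n) (a b : ℝ → ℝ)
    (ha : ContDiff ℝ (⊤ : ℕ∞) a) (hb : ContDiff ℝ (⊤ : ℕ∞) b) :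
    IsKilling (Matrix.diagonal Bd)
      (fun x => Pi.single (Sum.inr i) (a (x (Sum.inl 1)))
        + Pi.single (Sum.inl 0) (b (x (Sum.inl 1)) * x (Sum.inr i)))
      ↔ (∀ t : ℝ, deriv a t = -b t ∧ deriv b t = Bd i * a t) := by
  have ha' : Differentiable ℝ a := ha.differentiable (by simp)
  have hb' : Differentiable ℝ b := hb.differentiable (by simp)
  show IsKilling (Matrix.diagonal Bd) (XF i a b) ↔ _
  unfold IsKilling
  constructor
  · intro hK t
    constructor
    · have h := hK (Pi.single (Sum.inl 1) t) (Sum.inl 1) (Sum.inr i)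
      rw [killing_lhs Bd i a b ha' hb'] at h
      simp [Pi.single_apply] at h
      linarith
    · have h := hK (Pi.single (Sum.inl 1) t + Pi.single (Sum.inr i) 1) (Sum.inl 1) (Sum.inl 1)
      rw [killing_lhs Bd i a b ha' hb'] at h
      simp [Pi.single_apply] at h
      linarith
  · intro h x μ ν
    rw [killing_lhs Bd i a b ha' hb']
    obtain ⟨h1, h2⟩ := h (x (Sum.inl 1))
    split_ifs with c1 c2 c3 <;> simp_all <;> nlinarith [h1, h2]
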